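/- arXiv:2503.20276 — 6 statements merged into one kernel-verified Lean document; each statement's English description precedes it below -/
import Mathlib

section
/- Let V > 0, X_d > 0, X_q > 0 and P, Q ∈ ℝ with Q + V²/X_q > 0. Define φ = arctan( P / (Q + V²/X_q) ) and V_fd = (X_d·P/V)·sin φ + (X_d·Q/V + V)·cos φ. Set V_d = V sin φ and V_q = V cos φ. Then (V_fd/X_d)·V_d + (1/X_q − 1/X_d)·V_d·V_q = P and (V_fd/X_d)·V_q − (V_d²/X_q + V_q²/X_d) = Q. That is, the stationary phase difference φ and field voltage V_fd determined by the stationary power flow variables exactly reproduce the prescribed active and reactive power through the grid-forming output equations. -/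
open Real

/-!
Write `γ = Q + V²/X_q`. The field voltage is chosen so that `V (V_fd - V_q)/X_d = P sin φ + Q cos φ`,
which turns the output powers into `P sin² φ + γ sin φ cos φ` and `P sin φ cos φ + γ cos² φ - V²/X_q`.
The only property of `φ = arctan (P/γ)` that matters is `P cos φ = γ sin φ`,
and together with `sin² φ + cos² φ = 1` it reduces these to `P` and `γ - V²/X_q = Q`.
-/

namespace VSG

noncomputable section

def activePower (Xd Xq Vfd Vd Vq : ℝ) : ℝ :=
  (Vfd / Xd) * Vd + (1 / Xq - 1 / Xd) * Vd * Vq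

def reactivePower (Xd Xq Vfd Vd Vq : ℝ) : ℝ :=
  (Vfd / Xd) * Vq - (Vd ^ 2 / Xq + Vq ^ 2 / Xd)

def stationaryFieldVoltage (V Xd P Q φ : ℝ) : ℝ :=
  (Xd * P / V) * sin φ + (Xd * Q / V + V) * cos φ

theorem mul_cos_arctan_div {P γ : ℝ} (hγ : γ ≠ 0) :
    P * cos (arctan (P / γ)) = γ * sin (arctan (P / γ)) := by
  have hcos : cos (arctan (P / γ)) ≠ 0 := (cos_arctan_pos _).ne'
  have htan : sin (arctan (P / γ)) / cos (arctan (P / γ)) = P / γ := by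
    rw [← tan_eq_sin_div_cos, tan_arctan]
  field_simp at htan
  linear_combination -htan

section Stationary

variable {V Xd Xq P Q φ : ℝ}

theorem div_mul_stationaryFieldVoltage_sub (hV : V ≠ 0) (hXd : Xd ≠ 0) :
    V / Xd * (stationaryFieldVoltage V Xd P Q φ - V * cos φ) = P * sin φ + Q * cos φ := by
  unfold stationaryFieldVoltage
  field_simp
  ring

theorem activePower_stationary (hV : V ≠ 0) (hXd : Xd ≠ 0)
    (hφ : P * cos φ = (Q + V ^ 2 / Xq) * sin φ) :
    activePower Xd Xq (stationaryFieldVoltage V Xd P Q φ) (V * sin φ) (V * cos φ) = P := by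
  have hE := div_mul_stationaryFieldVoltage_sub (P := P) (Q := Q) (φ := φ) hV hXd
  calc activePower Xd Xq (stationaryFieldVoltage V Xd P Q φ) (V * sin φ) (V * cos φ)
      = P * sin φ ^ 2 + sin φ * ((Q + V ^ 2 / Xq) * cos φ) := by
        unfold activePower; linear_combination sin φ * hE
    _ = P := by linear_combination (-cos φ) * hφ + P * sin_sq_add_cos_sq φ

theorem reactivePower_stationary (hV : V ≠ 0) (hXd : Xd ≠ 0)
    (hφ : P * cos φ = (Q + V ^ 2 / Xq) * sin φ) :
    reactivePower Xd Xq (stationaryFieldVoltage V Xd P Q φ) (V * sin φ) (V * cos φ) = Q := by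
  have hE := div_mul_stationaryFieldVoltage_sub (P := P) (Q := Q) (φ := φ) hV hXd
  calc reactivePower Xd Xq (stationaryFieldVoltage V Xd P Q φ) (V * sin φ) (V * cos φ)
      = cos φ * (P * sin φ) + (Q + V ^ 2 / Xq) * cos φ ^ 2 - V ^ 2 / Xq := by
        unfold reactivePower
        linear_combination cos φ * hE - V ^ 2 / Xq * sin_sq_add_cos_sq φ
    _ = Q := by linear_combination sin φ * hφ + (Q + V ^ 2 / Xq) * sin_sq_add_cos_sq φ

end Stationary

end

end VSG

open VSG in
theorem vsg_stationary_values_reproduce_power_flow_general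
    (V Xd Xq P Q : ℝ) (hV : 0 < V) (hXd : 0 < Xd)
    (hγ : 0 < Q + V ^ 2 / Xq)
    (φ Vfd Vd Vq : ℝ)
    (hφ : φ = Real.arctan (P / (Q + V ^ 2 / Xq)))
    (hVfd : Vfd = (Xd * P / V) * Real.sin φ + (Xd * Q / V + V) * Real.cos φ)
    (hVd : Vd = V * Real.sin φ) (hVq : Vq = V * Real.cos φ) :
    (Vfd / Xd) * Vd + (1 / Xq - 1 / Xd) * Vd * Vq = P ∧
    (Vfd / Xd) * Vq - (Vd ^ 2 / Xq + Vq ^ 2 / Xd) = Q := by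
  have hparallel : P * cos φ = (Q + V ^ 2 / Xq) * sin φ := hφ ▸ mul_cos_arctan_div hγ.ne'
  subst hVfd hVd hVq
  exact ⟨activePower_stationary hV.ne' hXd.ne' hparallel,
    reactivePower_stationary hV.ne' hXd.ne' hparallel⟩

/-- The stationary phase difference `φ = arctan(P/(Q + V²/X_q))`
and the field voltage `V_fd = (X_d P/V) sin φ + (X_d Q/V + V) cos φ` exactly
reproduce the prescribed active and reactive powers through the grid-forming
output equations. -/
theorem vsg_stationary_values_reproduce_power_flow
    (V Xd Xq P Q : ℝ) (hV : 0 < V) (hXd : 0 < Xd) (hXq : 0 < Xq)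
    (hγ : 0 < Q + V ^ 2 / Xq)
    (φ Vfd Vd Vq : ℝ)
    (hφ : φ = Real.arctan (P / (Q + V ^ 2 / Xq)))
    (hVfd : Vfd = (Xd * P / V) * Real.sin φ + (Xd * Q / V + V) * Real.cos φ)
    (hVd : Vd = V * Real.sin φ) (hVq : Vq = V * Real.cos φ) :
    (Vfd / Xd) * Vd + (1 / Xq - 1 / Xd) * Vd * Vq = P ∧
    (Vfd / Xd) * Vq - (Vd ^ 2 / Xq + Vq ^ 2 / Xd) = Q :=
  vsg_stationary_values_reproduce_power_flow_general V Xd Xq P Q hV hXd hγ φ Vfd Vd Vq hφ hVfd hVd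
    hVq
end

section
/- Let ω₀, M, D, τ_d, τ_q > 0, let 0 < X'_d < X_d and 0 < X'_q < X_q, and let P_m, V_fd ∈ ℝ be constants. Let δ, ω, E_q, E_d, θ, V : ℝ → ℝ be differentiable with V(t) > 0 for all t. Define V_d = V sin(δ − θ), V_q = V cos(δ − θ), I_d = (E_q − V_q)/X'_d, I_q = (V_d − E_d)/X'_q, P = V_d I_d + V_q I_q, Q = V_q I_d − V_d I_q. Assume the two-axis model equations hold: δ' = ω₀ ω, M ω' = −D ω − P + P_m, τ_d E_q' = −E_q − (X_d − X'_d) I_d + V_fd, τ_q E_d' = −E_d + (X_q − X'_q) I_q. Then the energy U(t) = ω₀ M ω²/2 + E_q²/(2(X_d − X'_d)) + E_d²/(2(X_q − X'_q)) + (V_d − E_d)²/(2 X'_q) + (E_q − V_q)²/(2 X'_d) satisfies dU/dt = −D ω₀ ω² + ω₀ ω P_m + V_fd E_q'/(X_d − X'_d) − τ_d (E_q')²/(X_d − X'_d) − τ_q (E_d')²/(X_q − X'_q) − P θ' − (Q/V) V'. -/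
/-!
Every term of `U` is a quadratic storage `x² / (2c)`, with derivative `(x / c) ẋ`; for the two stator
terms `x / c` is the current `I_q` resp. `I_d`. The flux equations turn the field terms into
dissipation plus `-I_d Ė_q + I_q Ė_d`, which cancels the `Ė` parts of the stator terms. What remains of
those is `I_q V̇_d - I_d V̇_q`, and in polar form (`V_d = V sin φ`, `V_q = V cos φ`, `φ = δ - θ`),
`V̇_d = (V̇/V) V_d + φ̇ V_q` and `V̇_q = (V̇/V) V_q - φ̇ V_d`, so it equals `φ̇ P - (Q/V) V̇`. Since
`φ̇ = ω₀ ω - θ̇`, the `ω₀ ω P` part cancels against the swing equation.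
-/

section Polar

variable {r φ : ℝ → ℝ} {r' φ' t : ℝ}

theorem HasDerivAt.polar_sin (hr : HasDerivAt r r' t) (hφ : HasDerivAt φ φ' t) (h0 : r t ≠ 0) :
    HasDerivAt (fun s => r s * Real.sin (φ s))
      (r' / r t * (r t * Real.sin (φ t)) + r t * Real.cos (φ t) * φ') t :=
  (hr.mul hφ.sin).congr_deriv (by field_simp)

theorem HasDerivAt.polar_cos (hr : HasDerivAt r r' t) (hφ : HasDerivAt φ φ' t) (h0 : r t ≠ 0) :
    HasDerivAt (fun s => r s * Real.cos (φ s))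
      (r' / r t * (r t * Real.cos (φ t)) - r t * Real.sin (φ t) * φ') t :=
  (hr.mul hφ.cos).congr_deriv (by field_simp; ring)

end Polar

theorem HasDerivAt.sq_div_two_mul {f : ℝ → ℝ} {f' t : ℝ} (hf : HasDerivAt f f' t) (c : ℝ) :
    HasDerivAt (fun s => f s ^ 2 / (2 * c)) (f t / c * f') t :=
  ((hf.pow 2).div_const (2 * c)).congr_deriv (by field_simp; ring)

theorem two_axis_energy_dissipation_general
    (ω₀ M D τd τq Xd Xd' Xq Xq' Pm Vfd : ℝ)
    (hXd : Xd' < Xd) (hXq : Xq' < Xq)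
    (δ ω Eq Ed θ V : ℝ → ℝ)
    (hδ : Differentiable ℝ δ) (hω : Differentiable ℝ ω)
    (hEq : Differentiable ℝ Eq) (hEd : Differentiable ℝ Ed)
    (hθ : Differentiable ℝ θ) (hV : Differentiable ℝ V)
    (hVpos : ∀ t, 0 < V t)
    (Vd Vq Id Iq P Q : ℝ → ℝ)
    (hVd : ∀ t, Vd t = V t * Real.sin (δ t - θ t))
    (hVq : ∀ t, Vq t = V t * Real.cos (δ t - θ t))
    (hId : ∀ t, Id t = (Eq t - Vq t) / Xd')
    (hIq : ∀ t, Iq t = (Vd t - Ed t) / Xq')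
    (hP : ∀ t, P t = Vd t * Id t + Vq t * Iq t)
    (hQ : ∀ t, Q t = Vq t * Id t - Vd t * Iq t)
    -- two-axis model equations
    (hswing1 : ∀ t, deriv δ t = ω₀ * ω t)
    (hswing2 : ∀ t, M * deriv ω t = -D * ω t - P t + Pm)
    (hEqdyn : ∀ t, τd * deriv Eq t = -Eq t - (Xd - Xd') * Id t + Vfd)
    (hEddyn : ∀ t, τq * deriv Ed t = -Ed t + (Xq - Xq') * Iq t)
    (U : ℝ → ℝ)
    (hU : ∀ t, U t = ω₀ * M * ω t ^ 2 / 2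
        + Eq t ^ 2 / (2 * (Xd - Xd')) + Ed t ^ 2 / (2 * (Xq - Xq'))
        + (Vd t - Ed t) ^ 2 / (2 * Xq') + (Eq t - Vq t) ^ 2 / (2 * Xd')) :
    ∀ t, HasDerivAt U
      (-D * ω₀ * ω t ^ 2 + ω₀ * ω t * Pm
        + Vfd * deriv Eq t / (Xd - Xd')
        - τd * (deriv Eq t) ^ 2 / (Xd - Xd')
        - τq * (deriv Ed t) ^ 2 / (Xq - Xq')
        - P t * deriv θ t - (Q t / V t) * deriv V t) t := by
  intro t
  have hφ : HasDerivAt (fun s => δ s - θ s) (deriv δ t - deriv θ t) t :=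
    (hδ t).hasDerivAt.sub (hθ t).hasDerivAt
  have hVt : HasDerivAt V (deriv V t) t := (hV t).hasDerivAt
  have hVd' := hVt.polar_sin hφ (hVpos t).ne'
  have hVq' := hVt.polar_cos hφ (hVpos t).ne'
  rw [← funext hVd, ← hVd t, ← hVq t] at hVd'
  rw [← funext hVq, ← hVd t, ← hVq t] at hVq'
  have hU' := (((((((hω t).hasDerivAt.pow 2).const_mul (ω₀ * M)).div_const 2).add
    ((hEq t).hasDerivAt.sq_div_two_mul (Xd - Xd'))).add
    ((hEd t).hasDerivAt.sq_div_two_mul (Xq - Xq'))).add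
    ((hVd'.sub (hEd t).hasDerivAt).sq_div_two_mul Xq')).add
    (((hEq t).hasDerivAt.sub hVq').sq_div_two_mul Xd')
    |>.congr_of_eventuallyEq (.of_forall hU)
  rw [Pi.sub_apply, Pi.sub_apply, ← hIq t, ← hId t] at hU'
  have hEq_flux : Eq t / (Xd - Xd') = (Vfd - τd * deriv Eq t) / (Xd - Xd') - Id t := by
    field_simp [sub_ne_zero.mpr hXd.ne']
    linear_combination hEqdyn t
  have hEd_flux : Ed t / (Xq - Xq') = Iq t - τq * deriv Ed t / (Xq - Xq') := by
    field_simp [sub_ne_zero.mpr hXq.ne']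
    linear_combination hEddyn t
  refine hU'.congr_deriv ?_
  rw [hEq_flux, hEd_flux, hP t, hQ t]
  linear_combination (ω₀ * ω t) * (hswing2 t - hP t) + (Vd t * Id t + Vq t * Iq t) * hswing1 t

/-- Energy dissipation identity for the two-axis synchronous
generator model. -/
theorem two_axis_energy_dissipation
    (ω₀ M D τd τq Xd Xd' Xq Xq' Pm Vfd : ℝ)
    (hω₀ : 0 < ω₀) (hM : 0 < M) (hD : 0 < D) (hτd : 0 < τd) (hτq : 0 < τq)
    (hXd' : 0 < Xd') (hXd : Xd' < Xd) (hXq' : 0 < Xq') (hXq : Xq' < Xq)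
    (δ ω Eq Ed θ V : ℝ → ℝ)
    (hδ : Differentiable ℝ δ) (hω : Differentiable ℝ ω)
    (hEq : Differentiable ℝ Eq) (hEd : Differentiable ℝ Ed)
    (hθ : Differentiable ℝ θ) (hV : Differentiable ℝ V)
    (hVpos : ∀ t, 0 < V t)
    (Vd Vq Id Iq P Q : ℝ → ℝ)
    (hVd : ∀ t, Vd t = V t * Real.sin (δ t - θ t))
    (hVq : ∀ t, Vq t = V t * Real.cos (δ t - θ t))
    (hId : ∀ t, Id t = (Eq t - Vq t) / Xd')
    (hIq : ∀ t, Iq t = (Vd t - Ed t) / Xq')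
    (hP : ∀ t, P t = Vd t * Id t + Vq t * Iq t)
    (hQ : ∀ t, Q t = Vq t * Id t - Vd t * Iq t)
    -- two-axis model equations
    (hswing1 : ∀ t, deriv δ t = ω₀ * ω t)
    (hswing2 : ∀ t, M * deriv ω t = -D * ω t - P t + Pm)
    (hEqdyn : ∀ t, τd * deriv Eq t = -Eq t - (Xd - Xd') * Id t + Vfd)
    (hEddyn : ∀ t, τq * deriv Ed t = -Ed t + (Xq - Xq') * Iq t)
    (U : ℝ → ℝ)
    (hU : ∀ t, U t = ω₀ * M * ω t ^ 2 / 2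
        + Eq t ^ 2 / (2 * (Xd - Xd')) + Ed t ^ 2 / (2 * (Xq - Xq'))
        + (Vd t - Ed t) ^ 2 / (2 * Xq') + (Eq t - Vq t) ^ 2 / (2 * Xd')) :
    ∀ t, HasDerivAt U
      (-D * ω₀ * ω t ^ 2 + ω₀ * ω t * Pm
        + Vfd * deriv Eq t / (Xd - Xd')
        - τd * (deriv Eq t) ^ 2 / (Xd - Xd')
        - τq * (deriv Ed t) ^ 2 / (Xq - Xq')
        - P t * deriv θ t - (Q t / V t) * deriv V t) t :=
  two_axis_energy_dissipation_general ω₀ M D τd τq Xd Xd' Xq Xq' Pm Vfd hXd hXq δ ω Eq Ed θ V hδ hω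
    hEq hEd hθ hV hVpos Vd Vq Id Iq P Q hVd hVq hId hIq hP hQ hswing1 hswing2 hEqdyn hEddyn U hU
end

section
/- Let ω₀, D > 0, X_d > 0, X_q > 0, and let P_m, V_fd ∈ ℝ be constants. Let δ, θ, V : ℝ → ℝ be differentiable with V(t) > 0 for all t. Define V_d = V sin(δ − θ), V_q = V cos(δ − θ), P = (V_fd/X_d) V_d + (1/X_q − 1/X_d) V_d V_q, Q = (V_fd/X_d) V_q − (V_d²/X_q + V_q²/X_d). Assume D δ' = ω₀ (−P + P_m). Then U(t) = V_d²/(2 X_q) + (V_fd − V_q)²/(2 X_d) satisfies dU/dt = −(D/ω₀) (δ')² + P_m δ' − P θ' − (Q/V) V'. -/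
open Real

/-!
Writing `φ = δ - θ`, the voltage components rotate as `V_d' = V' sin φ + V_q φ'` and
`V_q' = V' cos φ - V_d φ'`. Substituting into `U' = (V_d / X_q) V_d' - ((V_fd - V_q) / X_d) V_q'`,
the coefficient of `φ'` is exactly `P` and that of `V'` is `-Q / V`, so `U' = P (δ' - θ') - (Q / V) V'`.
The droop law turns `P δ'` into `-(D / ω₀) δ'² + P_m δ'`.
-/

noncomputable section

namespace FDC

def activePower (Vfd Xd Xq vd vq : ℝ) : ℝ :=
  (Vfd / Xd) * vd + (1 / Xq - 1 / Xd) * vd * vq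

def reactivePower (Vfd Xd Xq vd vq : ℝ) : ℝ :=
  (Vfd / Xd) * vq - (vd ^ 2 / Xq + vq ^ 2 / Xd)

def energy (Vfd Xd Xq vd vq : ℝ) : ℝ :=
  vd ^ 2 / (2 * Xq) + (Vfd - vq) ^ 2 / (2 * Xd)

theorem hasDerivAt_energy {vd vq : ℝ → ℝ} {vd' vq' t : ℝ} (Vfd Xd Xq : ℝ)
    (hvd : HasDerivAt vd vd' t) (hvq : HasDerivAt vq vq' t) :
    HasDerivAt (fun s => energy Vfd Xd Xq (vd s) (vq s))
      (vd t / Xq * vd' - (Vfd - vq t) / Xd * vq') t := by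
  unfold energy
  exact (((hvd.pow 2).div_const (2 * Xq)).add
    (((hvq.const_sub Vfd).pow 2).div_const (2 * Xd))).congr_deriv (by ring)

theorem hasDerivAt_mul_sin_comp {V φ : ℝ → ℝ} {V' φ' t : ℝ}
    (hV : HasDerivAt V V' t) (hφ : HasDerivAt φ φ' t) :
    HasDerivAt (fun s => V s * sin (φ s)) (V' * sin (φ t) + V t * cos (φ t) * φ') t :=
  (hV.mul hφ.sin).congr_deriv (by ring)

theorem hasDerivAt_mul_cos_comp {V φ : ℝ → ℝ} {V' φ' t : ℝ}
    (hV : HasDerivAt V V' t) (hφ : HasDerivAt φ φ' t) :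
    HasDerivAt (fun s => V s * cos (φ s)) (V' * cos (φ t) - V t * sin (φ t) * φ') t :=
  (hV.mul hφ.cos).congr_deriv (by ring)

theorem energy_rate_eq_of_polar {Vfd Xd Xq v v' φ φ' : ℝ} (hv : v ≠ 0) :
    v * sin φ / Xq * (v' * sin φ + v * cos φ * φ')
        - (Vfd - v * cos φ) / Xd * (v' * cos φ - v * sin φ * φ')
      = activePower Vfd Xd Xq (v * sin φ) (v * cos φ) * φ'
        - reactivePower Vfd Xd Xq (v * sin φ) (v * cos φ) / v * v' := by
  unfold activePower reactivePower
  field_simp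
  ring

theorem hasDerivAt_energy_polar {V φ : ℝ → ℝ} {V' φ' t : ℝ} (Vfd Xd Xq : ℝ)
    (hV : HasDerivAt V V' t) (hφ : HasDerivAt φ φ' t) (hVt : V t ≠ 0) :
    HasDerivAt (fun s => energy Vfd Xd Xq (V s * sin (φ s)) (V s * cos (φ s)))
      (activePower Vfd Xd Xq (V t * sin (φ t)) (V t * cos (φ t)) * φ'
        - reactivePower Vfd Xd Xq (V t * sin (φ t)) (V t * cos (φ t)) / V t * V') t := by
  rw [← energy_rate_eq_of_polar hVt]
  exact hasDerivAt_energy Vfd Xd Xq (hasDerivAt_mul_sin_comp hV hφ)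
    (hasDerivAt_mul_cos_comp hV hφ)

end FDC

end

theorem fdc_energy_dissipation_general
    (ω₀ D Xd Xq Pm Vfd : ℝ)
    (hω₀ : 0 < ω₀)
    (δ θ V : ℝ → ℝ)
    (hδ : Differentiable ℝ δ) (hθ : Differentiable ℝ θ)
    (hV : Differentiable ℝ V) (hVpos : ∀ t, 0 < V t)
    (Vd Vq P Q : ℝ → ℝ)
    (hVd : ∀ t, Vd t = V t * Real.sin (δ t - θ t))
    (hVq : ∀ t, Vq t = V t * Real.cos (δ t - θ t))
    (hP : ∀ t, P t = (Vfd / Xd) * Vd t + (1 / Xq - 1 / Xd) * Vd t * Vq t)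
    (hQ : ∀ t, Q t = (Vfd / Xd) * Vq t - (Vd t ^ 2 / Xq + Vq t ^ 2 / Xd))
    (hdroop : ∀ t, D * deriv δ t = ω₀ * (-P t + Pm))
    (U : ℝ → ℝ)
    (hU : ∀ t, U t = Vd t ^ 2 / (2 * Xq) + (Vfd - Vq t) ^ 2 / (2 * Xd)) :
    ∀ t, HasDerivAt U
      (-(D / ω₀) * (deriv δ t) ^ 2 + Pm * deriv δ t
        - P t * deriv θ t - (Q t / V t) * deriv V t) t := by
  intro t
  have hU_eq : U = fun s => FDC.energy Vfd Xd Xq (V s * sin (δ s - θ s)) (V s * cos (δ s - θ s)) :=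
    funext fun s => by rw [hU, hVd, hVq, FDC.energy]
  have hPt : P t = FDC.activePower Vfd Xd Xq (V t * sin (δ t - θ t)) (V t * cos (δ t - θ t)) := by
    rw [hP, hVd, hVq, FDC.activePower]
  have hQt : Q t = FDC.reactivePower Vfd Xd Xq (V t * sin (δ t - θ t)) (V t * cos (δ t - θ t)) := by
    rw [hQ, hVd, hVq, FDC.reactivePower]
  have hdU := FDC.hasDerivAt_energy_polar (φ := fun s => δ s - θ s) Vfd Xd Xq (hV t).hasDerivAt
    ((hδ t).hasDerivAt.sub (hθ t).hasDerivAt) (hVpos t).ne'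
  rw [← hPt, ← hQt, ← hU_eq] at hdU
  have hdroop_t : D / ω₀ * deriv δ t = Pm - P t := by
    rw [div_mul_eq_mul_div, hdroop t, mul_div_cancel_left₀ _ hω₀.ne']
    ring
  convert hdU using 1
  linear_combination (-deriv δ t) * hdroop_t

/-- Energy dissipation identity for the frequency droop control
(FDC) grid-forming inverter model. -/
theorem fdc_energy_dissipation
    (ω₀ D Xd Xq Pm Vfd : ℝ)
    (hω₀ : 0 < ω₀) (hD : 0 < D) (hXd : 0 < Xd) (hXq : 0 < Xq)
    (δ θ V : ℝ → ℝ)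
    (hδ : Differentiable ℝ δ) (hθ : Differentiable ℝ θ)
    (hV : Differentiable ℝ V) (hVpos : ∀ t, 0 < V t)
    (Vd Vq P Q : ℝ → ℝ)
    (hVd : ∀ t, Vd t = V t * Real.sin (δ t - θ t))
    (hVq : ∀ t, Vq t = V t * Real.cos (δ t - θ t))
    (hP : ∀ t, P t = (Vfd / Xd) * Vd t + (1 / Xq - 1 / Xd) * Vd t * Vq t)
    (hQ : ∀ t, Q t = (Vfd / Xd) * Vq t - (Vd t ^ 2 / Xq + Vq t ^ 2 / Xd))
    (hdroop : ∀ t, D * deriv δ t = ω₀ * (-P t + Pm))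
    (U : ℝ → ℝ)
    (hU : ∀ t, U t = Vd t ^ 2 / (2 * Xq) + (Vfd - Vq t) ^ 2 / (2 * Xd)) :
    ∀ t, HasDerivAt U
      (-(D / ω₀) * (deriv δ t) ^ 2 + Pm * deriv δ t
        - P t * deriv θ t - (Q t / V t) * deriv V t) t :=
  fdc_energy_dissipation_general ω₀ D Xd Xq Pm Vfd hω₀ δ θ V hδ hθ hV hVpos Vd Vq P Q hVd hVq hP hQ
    hdroop U hU
end

section
/- Let X_d > 0, X_q > 0, V_fd ∈ ℝ, and define U : ℝ × ℝ × (0,∞) → ℝ by U(δ, θ, V) = V² sin²(δ−θ)/(2 X_q) + (V_fd − V cos(δ−θ))²/(2 X_d). Write V_d = V sin(δ−θ), V_q = V cos(δ−θ), P = (V_fd/X_d)V_d + (1/X_q − 1/X_d)V_d V_q, Q = (V_fd/X_d)V_q − (V_d²/X_q + V_q²/X_d), a = V_q²/X_q + V_d²/X_d + Q, and b = (1/V)(P + (1/X_q − 1/X_d)V_d V_q). Then the Hessian of U at (δ, θ, V), in the variable ordering (δ, θ, V), equals the symmetric 3×3 matrix [[a, −a, b], [−a, a, −b], [b, −b, (1/V²)(V_d²/X_q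 + V_q²/X_d)]]. -/
/-!
The energy depends on `(δ, θ)` only through the load angle `φ = δ - θ`, so `U = E ∘ L` with
`L (δ, θ, V) = (δ - θ, V)` linear and `E = reducedEnergy`. The Hessian of `U` is therefore
`Lᵀ (∇² E) L`, which produces the sign pattern `±a`, `±b`; the entries of `∇² E` are then
rewritten in terms of `V_d, V_q, P, Q`.
-/

open Real Matrix

noncomputable section
variable (Xd Xq Vfd : ℝ)

def reducedEnergy (φ V : ℝ) : ℝ :=
  V ^ 2 * sin φ ^ 2 / (2 * Xq) + (Vfd - V * cos φ) ^ 2 / (2 * Xd)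

/-- `∇E (φ, V) ⬝ (u, p)`. -/
def reducedEnergyDeriv (φ V u p : ℝ) : ℝ :=
  u * (V ^ 2 * sin φ * cos φ / Xq + (Vfd - V * cos φ) * V * sin φ / Xd)
    + p * (V * sin φ ^ 2 / Xq - (Vfd - V * cos φ) * cos φ / Xd)

/-- `(u, p)ᵀ ∇²E (φ, V) (w, q)`. -/
def reducedEnergyDeriv2 (φ V u p w q : ℝ) : ℝ :=
  u * w * (V ^ 2 * (cos φ ^ 2 - sin φ ^ 2) / Xq + V ^ 2 * sin φ ^ 2 / Xd
      + (Vfd - V * cos φ) * V * cos φ / Xd)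
    + (u * q + p * w) * (2 * V * sin φ * cos φ / Xq + Vfd * sin φ / Xd
      - 2 * V * sin φ * cos φ / Xd)
    + p * q * (sin φ ^ 2 / Xq + cos φ ^ 2 / Xd)

lemma hasDerivAt_line (a v : ℝ) : HasDerivAt (fun t : ℝ => a + t * v) v 0 := by
  simpa using ((hasDerivAt_id (0 : ℝ)).mul_const v).const_add a

lemma hasDerivAt_reducedEnergy_line (φ V u p : ℝ) :
    HasDerivAt (fun t => reducedEnergy Xd Xq Vfd (φ + t * u) (V + t * p))
      (reducedEnergyDeriv Xd Xq Vfd φ V u p) 0 := by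
  have hφ := hasDerivAt_line φ u
  have hV := hasDerivAt_line V p
  refine (((hV.pow 2).mul (hφ.sin.pow 2)).div_const (2 * Xq)
    |>.add ((((hV.mul hφ.cos).const_sub Vfd).pow 2).div_const (2 * Xd))).congr_deriv ?_
  simp only [reducedEnergyDeriv, Pi.pow_apply, Pi.mul_apply, zero_mul, add_zero]
  ring

lemma hasDerivAt_reducedEnergyDeriv_line (φ V u p w q : ℝ) :
    HasDerivAt (fun s => reducedEnergyDeriv Xd Xq Vfd (φ + s * w) (V + s * q) u p)
      (reducedEnergyDeriv2 Xd Xq Vfd φ V u p w q) 0 := by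
  have hφ := hasDerivAt_line φ w
  have hV := hasDerivAt_line V q
  have hVcos := hV.mul hφ.cos
  refine ((((((hV.pow 2).mul hφ.sin).mul hφ.cos).div_const Xq).add
      ((((hVcos.const_sub Vfd).mul hV).mul hφ.sin).div_const Xd)).const_mul u
    |>.add (((hV.mul (hφ.sin.pow 2)).div_const Xq).sub
      (((hVcos.const_sub Vfd).mul hφ.cos).div_const Xd) |>.const_mul p)).congr_deriv ?_
  simp only [reducedEnergyDeriv2, Pi.pow_apply, Pi.mul_apply, zero_mul, add_zero]
  ring

end

theorem deriv_deriv_line_eq_reducedEnergyDeriv2 (Xd Xq Vfd : ℝ) (U : (Fin 3 → ℝ) → ℝ)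
    (hU : ∀ x, U x = reducedEnergy Xd Xq Vfd (x 0 - x 1) (x 2)) (x c d : Fin 3 → ℝ) :
    deriv (fun s : ℝ => deriv (fun t : ℝ => U (fun k => x k + t * c k + s * d k)) 0) 0
      = reducedEnergyDeriv2 Xd Xq Vfd (x 0 - x 1) (x 2) (c 0 - c 1) (c 2) (d 0 - d 1) (d 2) := by
  have hplane : ∀ s t : ℝ, U (fun k => x k + t * c k + s * d k)
      = reducedEnergy Xd Xq Vfd (x 0 - x 1 + s * (d 0 - d 1) + t * (c 0 - c 1))
          (x 2 + s * d 2 + t * c 2) := by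
    intro s t
    rw [hU]
    congr 1 <;> ring
  simp_rw [hplane, (hasDerivAt_reducedEnergy_line ..).deriv]
  exact (hasDerivAt_reducedEnergyDeriv_line ..).deriv

theorem vsg_energy_hessian_general
    (Xd Xq Vfd : ℝ)
    (U : (Fin 3 → ℝ) → ℝ)
    (hU : ∀ x : Fin 3 → ℝ, U x
      = (x 2) ^ 2 * Real.sin (x 0 - x 1) ^ 2 / (2 * Xq)
        + (Vfd - x 2 * Real.cos (x 0 - x 1)) ^ 2 / (2 * Xd))
    (δ θ V : ℝ) (hV : 0 < V)
    (Vd Vq P Q a b : ℝ)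
    (hVd : Vd = V * Real.sin (δ - θ)) (hVq : Vq = V * Real.cos (δ - θ))
    (hP : P = (Vfd / Xd) * Vd + (1 / Xq - 1 / Xd) * Vd * Vq)
    (hQ : Q = (Vfd / Xd) * Vq - (Vd ^ 2 / Xq + Vq ^ 2 / Xd))
    (ha : a = Vq ^ 2 / Xq + Vd ^ 2 / Xd + Q)
    (hb : b = (1 / V) * (P + (1 / Xq - 1 / Xd) * Vd * Vq)) :
    ∀ i j : Fin 3,
      deriv (fun s : ℝ => deriv (fun t : ℝ => U
          (fun k => ![δ, θ, V] k + t * (if k = i then 1 else 0)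
                        + s * (if k = j then 1 else 0))) 0) 0
        = !![a, -a, b; -a, a, -b; b, -b, (1 / V ^ 2) * (Vd ^ 2 / Xq + Vq ^ 2 / Xd)] i j := by
  intro i j
  rw [deriv_deriv_line_eq_reducedEnergyDeriv2 Xd Xq Vfd U hU]
  subst hVd hVq hP hQ ha hb
  have hV₀ := hV.ne'
  fin_cases i <;> fin_cases j <;>
    simp [reducedEnergyDeriv2] <;> field_simp <;> ring

/-- The Hessian of the VSG energy function
`U(δ,θ,V) = V² sin²(δ−θ)/(2X_q) + (V_fd − V cos(δ−θ))²/(2X_d)` in the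
variable ordering `(δ, θ, V)` equals the explicit symmetric 3×3 matrix
`[[a, −a, b], [−a, a, −b], [b, −b, (1/V²)(V_d²/X_q + V_q²/X_d)]]`. -/
theorem vsg_energy_hessian
    (Xd Xq Vfd : ℝ) (hXd : 0 < Xd) (hXq : 0 < Xq)
    (U : (Fin 3 → ℝ) → ℝ)
    (hU : ∀ x : Fin 3 → ℝ, U x
      = (x 2) ^ 2 * Real.sin (x 0 - x 1) ^ 2 / (2 * Xq)
        + (Vfd - x 2 * Real.cos (x 0 - x 1)) ^ 2 / (2 * Xd))
    (δ θ V : ℝ) (hV : 0 < V)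
    (Vd Vq P Q a b : ℝ)
    (hVd : Vd = V * Real.sin (δ - θ)) (hVq : Vq = V * Real.cos (δ - θ))
    (hP : P = (Vfd / Xd) * Vd + (1 / Xq - 1 / Xd) * Vd * Vq)
    (hQ : Q = (Vfd / Xd) * Vq - (Vd ^ 2 / Xq + Vq ^ 2 / Xd))
    (ha : a = Vq ^ 2 / Xq + Vd ^ 2 / Xd + Q)
    (hb : b = (1 / V) * (P + (1 / Xq - 1 / Xd) * Vd * Vq)) :
    ∀ i j : Fin 3,
      deriv (fun s : ℝ => deriv (fun t : ℝ => U
          (fun k => ![δ, θ, V] k + t * (if k = i then 1 else 0)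
                        + s * (if k = j then 1 else 0))) 0) 0
        = !![a, -a, b; -a, a, -b; b, -b, (1 / V ^ 2) * (Vd ^ 2 / Xq + Vq ^ 2 / Xd)] i j :=
  vsg_energy_hessian_general Xd Xq Vfd U hU δ θ V hV Vd Vq P Q a b hVd hVq hP hQ ha hb
end

section
/- Let V > 0, X_d > 0, X_q > 0, P, Q ∈ ℝ and φ ∈ ℝ, and suppose γ := Q + V² cos²φ / X_q + V² sin²φ / X_d is nonzero. Set β = (1/V)(P + (1/X_q − 1/X_d) V² sin φ cos φ) and α = sin²φ / X_q + cos²φ / X_d. Then the Schur complement of the symmetric 3×3 matrix [[γ, −γ, β], [−γ, γ, −β], [β, −β, α]] with respect to its (1,1) entry γ equals the 2×2 matrix diag(0, g), where g = [ V⁴/(X_q X_d) − P² + (V² cos²φ / X_d + V² sin²φ / X_q) Q − 2 (1/X_q − 1/X_d) P V² cos φ sin φ ] / (V² γ). In particular the Schur complement equals the matrix Γ(V, P, Q; X_d, X_q) of the paper's stability condition. -/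
open Real Matrix

/-! Adding the first row and column of the Hessian to the second makes the second row and column
vanish, so the Schur complement is `diag(0, α - β² / γ)`. The remaining entry is `(αγ - β²) / γ`,
and `V² (αγ - β²)` expands, by `sin² φ + cos² φ = 1`, to the numerator of `g`. -/

namespace Matrix

variable {K : Type*} [Field K] {n : ℕ}

/-- When `M 0 0 = 0` this is just the lower-right block, since `x / 0 = 0`. -/
def schurComplementZero (M : Matrix (Fin (n + 1)) (Fin (n + 1)) K) : Matrix (Fin n) (Fin n) K :=
  fun i j => M i.succ j.succ - M i.succ 0 * M 0 j.succ / M 0 0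

theorem schurComplementZero_opposite_rows {γ β α : K} (hγ : γ ≠ 0) :
    schurComplementZero !![γ, -γ, β; -γ, γ, -β; β, -β, α] = !![0, 0; 0, α - β ^ 2 / γ] := by
  ext i j
  fin_cases i <;> fin_cases j <;> simp [schurComplementZero] <;> field_simp <;> ring

end Matrix

theorem sq_mul_minor_det_eq (V Xd Xq P Q φ : ℝ) (hV : V ≠ 0) :
    V ^ 2 * ((Real.sin φ ^ 2 / Xq + Real.cos φ ^ 2 / Xd)
        * (Q + V ^ 2 * Real.cos φ ^ 2 / Xq + V ^ 2 * Real.sin φ ^ 2 / Xd)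
      - ((1 / V) * (P + (1 / Xq - 1 / Xd) * V ^ 2 * Real.sin φ * Real.cos φ)) ^ 2)
    = V ^ 4 / (Xq * Xd) - P ^ 2
        + (V ^ 2 * Real.cos φ ^ 2 / Xd + V ^ 2 * Real.sin φ ^ 2 / Xq) * Q
        - 2 * (1 / Xq - 1 / Xd) * P * V ^ 2 * Real.cos φ * Real.sin φ := by
  have hsc := Real.sin_sq_add_cos_sq φ
  field_simp
  linear_combination (V ^ 4 / (Xq * Xd) * (Real.sin φ ^ 2 + Real.cos φ ^ 2 + 1)) * hsc

theorem schur_complement_equals_Gamma_general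
    (V Xd Xq P Q φ : ℝ) (hV : 0 < V)
    (γ β α g : ℝ)
    (hγdef : γ = Q + V ^ 2 * Real.cos φ ^ 2 / Xq + V ^ 2 * Real.sin φ ^ 2 / Xd)
    (hγ : γ ≠ 0)
    (hβ : β = (1 / V) * (P + (1 / Xq - 1 / Xd) * V ^ 2 * Real.sin φ * Real.cos φ))
    (hα : α = Real.sin φ ^ 2 / Xq + Real.cos φ ^ 2 / Xd)
    (hg : g = (V ^ 4 / (Xq * Xd) - P ^ 2
        + (V ^ 2 * Real.cos φ ^ 2 / Xd + V ^ 2 * Real.sin φ ^ 2 / Xq) * Q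
        - 2 * (1 / Xq - 1 / Xd) * P * V ^ 2 * Real.cos φ * Real.sin φ)
        / (V ^ 2 * γ))
    (M : Matrix (Fin 3) (Fin 3) ℝ)
    (hM : M = !![γ, -γ, β; -γ, γ, -β; β, -β, α])
    (S : Matrix (Fin 2) (Fin 2) ℝ)
    (hS : ∀ i j : Fin 2, S i j
      = M i.succ j.succ - M i.succ 0 * M 0 j.succ / γ) :
    S = !![0, 0; 0, g] := by
  have hS_schur : S = schurComplementZero M := by
    ext i j
    rw [hS, schurComplementZero, hM]
    rfl
  have hg_minor : g = α - β ^ 2 / γ := by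
    rw [hg, ← sq_mul_minor_det_eq V Xd Xq P Q φ hV.ne', ← hγdef, ← hβ, ← hα]
    field_simp
  rw [hS_schur, hM, schurComplementZero_opposite_rows hγ, hg_minor]

/-- The Schur complement of the reduced 3×3 Hessian
`[[γ, −γ, β], [−γ, γ, −β], [β, −β, α]]` with respect to its `(1,1)` entry `γ`
equals `diag(0, g) = Γ(V,P,Q;X_d,X_q)`, the matrix of the paper's stability
condition. -/
theorem schur_complement_equals_Gamma
    (V Xd Xq P Q φ : ℝ) (hV : 0 < V) (hXd : 0 < Xd) (hXq : 0 < Xq)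
    (γ β α g : ℝ)
    (hγdef : γ = Q + V ^ 2 * Real.cos φ ^ 2 / Xq + V ^ 2 * Real.sin φ ^ 2 / Xd)
    (hγ : γ ≠ 0)
    (hβ : β = (1 / V) * (P + (1 / Xq - 1 / Xd) * V ^ 2 * Real.sin φ * Real.cos φ))
    (hα : α = Real.sin φ ^ 2 / Xq + Real.cos φ ^ 2 / Xd)
    (hg : g = (V ^ 4 / (Xq * Xd) - P ^ 2
        + (V ^ 2 * Real.cos φ ^ 2 / Xd + V ^ 2 * Real.sin φ ^ 2 / Xq) * Q
        - 2 * (1 / Xq - 1 / Xd) * P * V ^ 2 * Real.cos φ * Real.sin φ)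
        / (V ^ 2 * γ))
    (M : Matrix (Fin 3) (Fin 3) ℝ)
    (hM : M = !![γ, -γ, β; -γ, γ, -β; β, -β, α])
    (S : Matrix (Fin 2) (Fin 2) ℝ)
    (hS : ∀ i j : Fin 2, S i j
      = M i.succ j.succ - M i.succ 0 * M 0 j.succ / γ) :
    S = !![0, 0; 0, g] :=
  schur_complement_equals_Gamma_general V Xd Xq P Q φ hV γ β α g hγdef hγ hβ hα hg M hM S hS
end

section
/- Let N ≥ 1, let B ∈ ℝ^{N×N} be symmetric with −B positive semidefinite, and for each i let V_i > 0, X_{qi} > 0, X_{di} > 0 and φ_i, θ_i ∈ ℝ. Define the 2×2 matrices Φ_i = [[V_i cos φ_i, −sin φ_i], [V_i sin φ_i, cos φ_i]] and Θ_i = [[−V_i sin θ_i, cos θ_i], [V_i cos θ_i, sin θ_i]], and the 2N×2N matrices D_Φ = blockdiag(Φ_1, …, Φ_N), D_Θ = blockdiag(Θ_1, …, Θ_N), Λ = blockdiag( diag(1/X_{q1}, 1/X_{d1}), …, diag(1/X_{qN}, 1/X_{dN}) ). Then the matrix H_vv = D_Φᵀ Λ D_Φ + D_Θᵀ (−B ⊗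 I₂) D_Θ is positive definite, where −B ⊗ I₂ denotes the Kronecker product replacing each entry −B_ij by −B_ij · I₂. -/
open Real Matrix Kronecker

/-! `Λ` is a positive diagonal matrix and `D_Φ` is invertible, its determinant being
`∏ i, det Φ_i = ∏ i, V_i > 0`, so `D_Φᵀ Λ D_Φ` is positive definite. The Kronecker product
`(-B) ⊗ I₂` of positive semidefinite matrices is positive semidefinite, and hence so is its
congruence `D_Θᵀ ((-B) ⊗ I₂) D_Θ` by any `D_Θ`. -/

namespace Matrix

theorem det_eq_prod_det_of_apply_eq_ite {ι o R : Type*} [Fintype ι] [DecidableEq ι]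
    [Fintype o] [DecidableEq o] [CommRing R] {D : Matrix (ι × o) (ι × o) R}
    {M : ι → Matrix o o R} (hD : ∀ p q, D p q = if p.1 = q.1 then M p.1 p.2 q.2 else 0) :
    D.det = ∏ i, (M i).det := by
  have hD_eq : D = reindex (Equiv.prodComm o ι) (Equiv.prodComm o ι) (blockDiagonal M) := by
    ext p q
    simp [hD, blockDiagonal_apply]
  rw [hD_eq, det_reindex_self, det_blockDiagonal]

theorem det_scaled_rotation (V φ : ℝ) :
    !![V * cos φ, -sin φ; V * sin φ, cos φ].det = V := by
  rw [det_fin_two_of]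
  linear_combination V * sin_sq_add_cos_sq φ

end Matrix

theorem Hvv_pos_def_general
    (N : ℕ) (B : Matrix (Fin N) (Fin N) ℝ)
    (hBpsd : (-B).PosSemidef)
    (V Xq Xd φ : Fin N → ℝ)
    (hV : ∀ i, 0 < V i) (hXq : ∀ i, 0 < Xq i) (hXd : ∀ i, 0 < Xd i)
    (Φ : Fin N → Matrix (Fin 2) (Fin 2) ℝ)
    (hΦ : ∀ i, Φ i = !![V i * Real.cos (φ i), -Real.sin (φ i);
                        V i * Real.sin (φ i), Real.cos (φ i)])
    (DΦ DΘ Λ : Matrix (Fin N × Fin 2) (Fin N × Fin 2) ℝ)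
    (hDΦ : ∀ p q : Fin N × Fin 2,
      DΦ p q = if p.1 = q.1 then Φ p.1 p.2 q.2 else 0)
    (hΛ : Λ = Matrix.diagonal
      (fun p : Fin N × Fin 2 => if p.2 = 0 then 1 / Xq p.1 else 1 / Xd p.1)) :
    (DΦᵀ * Λ * DΦ + DΘᵀ * ((-B) ⊗ₖ (1 : Matrix (Fin 2) (Fin 2) ℝ)) * DΘ).PosDef := by
  have hΛpd : Λ.PosDef := by
    rw [hΛ, posDef_diagonal_iff]
    intro p
    split_ifs
    exacts [one_div_pos.mpr (hXq p.1), one_div_pos.mpr (hXd p.1)]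
  have hDΦ_det : DΦ.det ≠ 0 := by
    rw [det_eq_prod_det_of_apply_eq_ite hDΦ]
    simp only [hΦ, det_scaled_rotation]
    exact Finset.prod_ne_zero_iff.mpr fun i _ => (hV i).ne'
  have hK : ((-B) ⊗ₖ (1 : Matrix (Fin 2) (Fin 2) ℝ)).PosSemidef :=
    hBpsd.kronecker PosSemidef.one
  simp only [← conjTranspose_eq_transpose_of_trivial]
  exact (hΛpd.conjTranspose_mul_mul_same (mulVec_injective_of_det_ne_zero hDΦ_det)).add_posSemidef
    (hK.conjTranspose_mul_mul_same DΘ)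

/-- The `(θ,V)`-block of the total Hessian,
`H_vv = D_Φᵀ Λ D_Φ + D_Θᵀ (−B ⊗ I₂) D_Θ`, is positive definite whenever `B`
is symmetric with `−B` positive semidefinite, `V_i > 0`, `X_{qi} > 0`,
`X_{di} > 0`. -/
theorem Hvv_pos_def
    (N : ℕ) (hN : 1 ≤ N) (B : Matrix (Fin N) (Fin N) ℝ)
    (hBsym : B.IsSymm) (hBpsd : (-B).PosSemidef)
    (V Xq Xd φ θ : Fin N → ℝ)
    (hV : ∀ i, 0 < V i) (hXq : ∀ i, 0 < Xq i) (hXd : ∀ i, 0 < Xd i)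
    (Φ Θ : Fin N → Matrix (Fin 2) (Fin 2) ℝ)
    (hΦ : ∀ i, Φ i = !![V i * Real.cos (φ i), -Real.sin (φ i);
                        V i * Real.sin (φ i), Real.cos (φ i)])
    (hΘ : ∀ i, Θ i = !![-V i * Real.sin (θ i), Real.cos (θ i);
                        V i * Real.cos (θ i), Real.sin (θ i)])
    (DΦ DΘ Λ : Matrix (Fin N × Fin 2) (Fin N × Fin 2) ℝ)
    (hDΦ : ∀ p q : Fin N × Fin 2,
      DΦ p q = if p.1 = q.1 then Φ p.1 p.2 q.2 else 0)
    (hDΘ : ∀ p q : Fin N × Fin 2,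
      DΘ p q = if p.1 = q.1 then Θ p.1 p.2 q.2 else 0)
    (hΛ : Λ = Matrix.diagonal
      (fun p : Fin N × Fin 2 => if p.2 = 0 then 1 / Xq p.1 else 1 / Xd p.1)) :
    (DΦᵀ * Λ * DΦ + DΘᵀ * ((-B) ⊗ₖ (1 : Matrix (Fin 2) (Fin 2) ℝ)) * DΘ).PosDef :=
  Hvv_pos_def_general N B hBpsd V Xq Xd φ hV hXq hXd Φ hΦ DΦ DΘ Λ hDΦ hΛ
end
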